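/- Let (X, 𝒮, μ) be a finite measure space and let g : X → X be an injective bimeasurable transformation satisfying Condition (*). Then the composition operator T_g : L^p(μ) → L^p(μ) is topologically transitive if and only if for each ε > 0 there exist an integer k ≥ 1 and a measurable set B ⊆ X with μ(X \ B) < ε and B ∩ g^k(B) = ∅. -/

import Mathlib

/-!
Condition (*) makes `g` nonsingular, so `T^k φ = φ ∘ g^k` almost everywhere.

If `T` is transitive, some `φ` close to `1` has `T^k φ` close to `-1`. By Chebyshev's inequality,
off a set of small measure `φ > 1/2` and `φ ∘ g^k < -1/2`; the set `B` where both hold cannot meet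
`g^k(B)`, since on `g^k(B)` the function `φ` is below `-1/2`.

Conversely, take simple functions `s ∈ U` and `t ∈ V` (simple functions are dense as `p < ∞`) and
`B` with small complement and `B ∩ g^k(B) = ∅`. The bounded function `ζ` equal to `s` on `B`, to
`t ∘ g^{-k}` on `g^k(B)` and to `0` elsewhere is close to `s`, and its image `ζ ∘ g^k` is close to
`t`: both errors are bounded and supported in `X \ B`.
-/

open MeasureTheory Filter Set Topology ENNReal NNReal

noncomputable section

/-- The odometer (the "+1" map, with carry over to the right) on `Π i, Fin (α i)`. -/
def odometer (α : ℕ → ℕ) (x : ∀ i, Fin (α i)) : ∀ i, Fin (α i) :=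
  fun i =>
    if ∀ j < i, ((x j : ℕ) + 1 = α j)
    then ⟨((x i : ℕ) + 1) % α i, Nat.mod_lt _ (x i).pos⟩
    else x i

def TopTransitive {X : Type*} [TopologicalSpace X] (T : X → X) : Prop :=
  ∀ U V : Set X, IsOpen U → IsOpen V → U.Nonempty → V.Nonempty →
    ∃ k : ℕ, 1 ≤ k ∧ (T^[k] '' U ∩ V).Nonempty

def TopMixing {X : Type*} [TopologicalSpace X] (T : X → X) : Prop :=
  ∀ U V : Set X, IsOpen U → IsOpen V → U.Nonempty → V.Nonempty →
    ∃ k₀ : ℕ, 1 ≤ k₀ ∧ ∀ k ≥ k₀, (T^[k] '' U ∩ V).Nonempty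

/-- `μ` is the product of the probability measures on the coordinates `Fin (α i)` given by
the weights `w i`: every basic cylinder has measure the product of the weights. -/
def IsProductMeasure (α : ℕ → ℕ) (w : ∀ i, Fin (α i) → NNReal)
    (μ : Measure (∀ i, Fin (α i))) : Prop :=
  ∀ (n : ℕ) (a : ∀ i : Fin n, Fin (α i.1)),
    μ {x | ∀ i : Fin n, x i.1 = a i} = ∏ i : Fin n, (w i.1 (a i) : ENNReal)

/-- Condition (*): there is `c > 0` with `μ B ≥ c • μ (g ⁻¹ B)` for all measurable `B`. -/
def CondStar {X : Type*} [MeasurableSpace X] (μ : Measure X) (g : X → X) : Prop :=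
  ∃ c : ℝ, 0 < c ∧ ∀ B : Set X, MeasurableSet B →
    ENNReal.ofReal c * μ (g ⁻¹' B) ≤ μ B

section

variable {X : Type*} [MeasurableSpace X] {μ : Measure X}

theorem CondStar.quasiMeasurePreserving {g : X → X} (hstar : CondStar μ g) (hg : Measurable g) :
    Measure.QuasiMeasurePreserving g μ μ := by
  obtain ⟨c, hc, hcμ⟩ := hstar
  refine ⟨hg, Measure.AbsolutelyContinuous.mk fun s hs hμs => ?_⟩
  simpa [Measure.map_apply hg hs, hμs, not_le.mpr hc] using hcμ s hs

theorem MeasurableEmbedding.iterate {g : X → X} (hg : MeasurableEmbedding g) :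
    ∀ k : ℕ, MeasurableEmbedding g^[k]
  | 0 => MeasurableEmbedding.id
  | k + 1 => (hg.iterate k).comp hg

theorem Lp.iterate_ae_eq_comp_iterate {E : Type*} [NormedAddCommGroup E] {p : ℝ≥0∞}
    {g : X → X} (hg : Measure.QuasiMeasurePreserving g μ μ) {T : Lp E p μ → Lp E p μ}
    (hT : ∀ φ, T φ =ᵐ[μ] φ ∘ g) (k : ℕ) (φ : Lp E p μ) : T^[k] φ =ᵐ[μ] φ ∘ g^[k] := by
  induction k with
  | zero => rfl
  | succ k ih =>
    rw [Function.iterate_succ_apply', Function.iterate_succ, ← Function.comp_assoc]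
    exact (hT _).trans (hg.ae_eq ih)

theorem ENNReal.exists_pos_mul_ofReal_rpow_lt {C r : ℝ≥0∞} (hC : C ≠ ⊤) (hr : r ≠ 0) {a : ℝ}
    (ha : 0 < a) : ∃ ε : ℝ, 0 < ε ∧ C * ENNReal.ofReal ε ^ a < r := by
  have hlim : Tendsto (fun ε : ℝ => C * ENNReal.ofReal ε ^ a) (𝓝[>] 0) (𝓝 0) := by
    have h := ((ENNReal.continuous_rpow_const (y := a)).comp ENNReal.continuous_ofReal).tendsto
      (0 : ℝ)
    simpa [ENNReal.zero_rpow_of_pos ha] using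
      ENNReal.Tendsto.const_mul (h.mono_left nhdsWithin_le_nhds) (Or.inr hC)
  obtain ⟨ε, hεr, hε⟩ :=
    ((hlim.eventually (gt_mem_nhds hr.bot_lt)).and self_mem_nhdsWithin).exists
  exact ⟨ε, hε, hεr⟩

theorem Lp.meas_ge_norm_sub_const_le_mul_pow_edist [IsFiniteMeasure μ] {E : Type*}
    [NormedAddCommGroup E] {p : ℝ≥0∞} (hp0 : p ≠ 0) (hp : p ≠ ⊤) (φ : Lp E p μ) (c : E) {δ : ℝ}
    (hδ : 0 < δ) :
    μ {x | δ ≤ ‖φ x - c‖} ≤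
      (ENNReal.ofReal δ)⁻¹ ^ p.toReal * edist φ (Lp.const p μ c) ^ p.toReal := by
  have hdist : edist φ (Lp.const p μ c) = eLpNorm (fun x => φ x - c) p μ := by
    rw [Lp.edist_def]
    exact eLpNorm_congr_ae ((ae_eq_refl _).sub (Lp.coeFn_const p μ c))
  have hset : {x | δ ≤ ‖φ x - c‖} = {x | ENNReal.ofReal δ ≤ ‖φ x - c‖ₑ} := by
    ext x
    rw [mem_ofPred_eq, mem_ofPred_eq, ← ofReal_norm, ENNReal.ofReal_le_ofReal_iff (norm_nonneg _)]
  rw [hdist, hset]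
  exact meas_ge_le_mul_pow_eLpNorm_enorm μ hp0 hp
    ((Lp.aestronglyMeasurable φ).sub aestronglyMeasurable_const) (by simpa using hδ) (by simp)

theorem exists_disjoint_image_of_ae_eq_comp {φ ψ : X → ℝ} {G : X → X} (hφ : Measurable φ)
    (hψ : Measurable ψ) (hψφ : ψ =ᵐ[μ] φ ∘ G) :
    ∃ B, MeasurableSet B ∧
      μ Bᶜ ≤ μ {x | 1 / 2 ≤ ‖φ x - 1‖} + μ {x | 1 / 2 ≤ ‖ψ x - -1‖} ∧
      Disjoint B (G '' B) := by
  set N := toMeasurable μ {x | ψ x ≠ φ (G x)}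
  have hN : μ N = 0 := by rw [measure_toMeasurable]; exact hψφ
  refine ⟨({x | 1 / 2 < φ x} ∩ {x | ψ x < -(1 / 2)}) \ N,
    ((measurableSet_lt measurable_const hφ).inter (measurableSet_lt hψ measurable_const)).diff
      (measurableSet_toMeasurable _ _), ?_, ?_⟩
  · set Sφ := {x | 1 / 2 ≤ ‖φ x - 1‖}
    set Sψ := {x | 1 / 2 ≤ ‖ψ x - -1‖}
    have hsub : (({x | 1 / 2 < φ x} ∩ {x | ψ x < -(1 / 2)}) \ N)ᶜ ⊆ Sφ ∪ Sψ ∪ N := by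
      intro x hx
      by_contra h
      simp only [Sφ, Sψ, mem_union, mem_ofPred_eq, not_or, not_le, Real.norm_eq_abs, abs_lt] at h
      exact hx ⟨⟨show 1 / 2 < φ x by linarith, show ψ x < -(1 / 2) by linarith⟩, h.2⟩
    calc μ _ ≤ μ (Sφ ∪ Sψ ∪ N) := measure_mono hsub
      _ ≤ μ (Sφ ∪ Sψ) + μ N := measure_union_le _ _
      _ ≤ μ Sφ + μ Sψ := by rw [hN, add_zero]; exact measure_union_le _ _
  · rw [Set.disjoint_left]
    rintro _ ⟨⟨hφy, -⟩, -⟩ ⟨x, ⟨⟨-, hψx⟩, hxN⟩, rfl⟩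
    have hx : ψ x = φ (G x) := by
      by_contra h
      exact hxN (subset_toMeasurable _ _ h)
    simp only [mem_ofPred_eq, hx] at hφy hψx
    linarith

theorem exists_disjoint_image_iterate_of_topTransitive [IsFiniteMeasure μ] {p : ℝ≥0∞}
    [Fact (1 ≤ p)] (hp : p ≠ ⊤) {g : X → X} {T : Lp ℝ p μ → Lp ℝ p μ}
    (hT : ∀ k φ, T^[k] φ =ᵐ[μ] φ ∘ g^[k]) (htrans : TopTransitive T) {ε : ℝ} (hε : 0 < ε) :
    ∃ k, 1 ≤ k ∧ ∃ B, MeasurableSet B ∧ μ Bᶜ < ENNReal.ofReal ε ∧ Disjoint B (g^[k] '' B) := by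
  have hp0 : p ≠ 0 := (zero_lt_one.trans_le Fact.out).ne'
  obtain ⟨ρ, hρ, hρε⟩ := ENNReal.exists_pos_mul_ofReal_rpow_lt
    (C := (ENNReal.ofReal (1 / 2))⁻¹ ^ p.toReal) (r := ENNReal.ofReal (ε / 2))
    (by finiteness) (by simpa using hε) (ENNReal.toReal_pos hp0 hp)
  have hρ' : 0 < ENNReal.ofReal ρ := ENNReal.ofReal_pos.mpr hρ
  obtain ⟨k, hk, _, ⟨φ, hφ, rfl⟩, hTφ⟩ := htrans
    (Metric.eball (Lp.const p μ 1) (ENNReal.ofReal ρ))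
    (Metric.eball (Lp.const p μ (-1)) (ENNReal.ofReal ρ)) Metric.isOpen_eball Metric.isOpen_eball
    ⟨_, Metric.mem_eball_self hρ'⟩ ⟨_, Metric.mem_eball_self hρ'⟩
  have hsmall : ∀ (f : Lp ℝ p μ) (c : ℝ), f ∈ Metric.eball (Lp.const p μ c) (ENNReal.ofReal ρ) →
      μ {x | 1 / 2 ≤ ‖f x - c‖} < ENNReal.ofReal (ε / 2) := fun f c hf =>
    (Lp.meas_ge_norm_sub_const_le_mul_pow_edist hp0 hp f c one_half_pos).trans_lt <|
      (mul_le_mul_right (ENNReal.rpow_le_rpow (Metric.mem_eball.mp hf).le ENNReal.toReal_nonneg)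
        _).trans_lt hρε
  obtain ⟨B, hB, hμB, hdisj⟩ := exists_disjoint_image_of_ae_eq_comp
    (Lp.stronglyMeasurable φ).measurable (Lp.stronglyMeasurable _).measurable (hT k φ)
  refine ⟨k, hk, B, hB, hμB.trans_lt ?_, hdisj⟩
  calc _ < ENNReal.ofReal (ε / 2) + ENNReal.ofReal (ε / 2) :=
        ENNReal.add_lt_add (hsmall φ 1 hφ) (hsmall _ (-1) hTφ)
    _ = ENNReal.ofReal ε := by rw [← ENNReal.ofReal_add (by positivity) (by positivity), add_halves]

theorem exists_measurable_eqOn_eqOn_comp {E : Type*} [NormedAddCommGroup E] [MeasurableSpace E]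
    {G : X → X} (hG : MeasurableEmbedding G) {B : Set X} (hB : MeasurableSet B)
    (hdisj : Disjoint B (G '' B)) {s t : X → E} (hs : Measurable s) (ht : Measurable t) {M : ℝ}
    (hsM : ∀ x, ‖s x‖ ≤ M) (htM : ∀ x, ‖t x‖ ≤ M) :
    ∃ ζ : X → E, Measurable ζ ∧ (∀ x, ‖ζ x‖ ≤ M) ∧ EqOn ζ s B ∧ EqOn (ζ ∘ G) t B := by
  classical
  obtain ⟨η, hη, hηG⟩ := hG.exists_measurable_extend ht fun _ => ⟨0⟩
  refine ⟨B.piecewise s ((G '' B).piecewise η 0),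
    hs.piecewise hB (hη.piecewise (hG.measurableSet_image' hB) measurable_const), fun y => ?_,
    fun x hx => piecewise_eq_of_mem _ _ _ hx, fun x hx => ?_⟩
  · by_cases hyB : y ∈ B
    · rw [piecewise_eq_of_mem _ _ _ hyB]; exact hsM y
    rw [piecewise_eq_of_notMem _ _ _ hyB]
    by_cases hy : y ∈ G '' B
    · obtain ⟨x, hx, rfl⟩ := hy
      rw [piecewise_eq_of_mem _ _ _ (mem_image_of_mem G hx), ← Function.comp_apply (f := η), hηG]
      exact htM x
    · rw [piecewise_eq_of_notMem _ _ _ hy]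
      simpa using (norm_nonneg _).trans (hsM y)
  · have hGx : G x ∈ G '' B := mem_image_of_mem G hx
    rw [Function.comp_apply, piecewise_eq_of_notMem _ _ _ (disjoint_right.mp hdisj hGx),
      piecewise_eq_of_mem _ _ _ hGx]
    exact congrFun hηG x

theorem Lp.edist_le_of_eqOn {E : Type*} [NormedAddCommGroup E] {p : ℝ≥0∞} {f f' : Lp E p μ}
    {a b : X → E} {B : Set X} {M : ℝ} (hf : f =ᵐ[μ] a) (hf' : f' =ᵐ[μ] b) (ha : ∀ x, ‖a x‖ ≤ M)
    (hb : ∀ x, ‖b x‖ ≤ M) (hab : EqOn a b B) :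
    edist f f' ≤ μ Bᶜ ^ p.toReal⁻¹ * ENNReal.ofReal (2 * M) := by
  have hsupp : (a - b).support ⊆ Bᶜ := fun x hx hxB => hx (sub_eq_zero.mpr (hab hxB))
  rw [Lp.edist_def, eLpNorm_congr_ae (hf.sub hf'), ← eLpNorm_restrict_eq_of_support_subset hsupp]
  refine (eLpNorm_le_of_ae_bound (ae_of_all _ fun x => ?_)).trans_eq
    (by rw [Measure.restrict_apply_univ])
  exact (norm_sub_le _ _).trans (by linarith [ha x, hb x])

theorem topTransitive_of_exists_disjoint_image_iterate [IsFiniteMeasure μ] {p : ℝ≥0∞}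
    [Fact (1 ≤ p)] (hp : p ≠ ⊤) {g : X → X} (hg : MeasurableEmbedding g)
    (hqmp : Measure.QuasiMeasurePreserving g μ μ) {T : Lp ℝ p μ → Lp ℝ p μ}
    (hT : ∀ k φ, T^[k] φ =ᵐ[μ] φ ∘ g^[k])
    (h : ∀ ε : ℝ, 0 < ε → ∃ k, 1 ≤ k ∧ ∃ B, MeasurableSet B ∧ μ Bᶜ < ENNReal.ofReal ε ∧
      Disjoint B (g^[k] '' B)) :
    TopTransitive T := by
  have hp0 : p ≠ 0 := (zero_lt_one.trans_le Fact.out).ne'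
  intro U V hU hV hUne hVne
  obtain ⟨s, hsU⟩ := (Lp.simpleFunc.denseRange hp).exists_mem_open hU hUne
  obtain ⟨t, htV⟩ := (Lp.simpleFunc.denseRange hp).exists_mem_open hV hVne
  obtain ⟨rs, hrs, hrsU⟩ := EMetric.isOpen_iff.mp hU _ hsU
  obtain ⟨rt, hrt, hrtV⟩ := EMetric.isOpen_iff.mp hV _ htV
  set s' := Lp.simpleFunc.toSimpleFunc s
  set t' := Lp.simpleFunc.toSimpleFunc t
  obtain ⟨Ms, hMs⟩ := s'.exists_forall_norm_le
  obtain ⟨Mt, hMt⟩ := t'.exists_forall_norm_le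
  set M := max Ms Mt
  have hsM (x : X) : ‖s' x‖ ≤ M := (hMs x).trans (le_max_left _ _)
  have htM (x : X) : ‖t' x‖ ≤ M := (hMt x).trans (le_max_right _ _)
  obtain ⟨ε, hε, hεr⟩ := ENNReal.exists_pos_mul_ofReal_rpow_lt (C := ENNReal.ofReal (2 * M))
    (r := min rs rt) ENNReal.ofReal_ne_top (lt_min hrs hrt).ne'
    (inv_pos.mpr (ENNReal.toReal_pos hp0 hp))
  obtain ⟨k, hk, B, hB, hμB, hdisj⟩ := h ε hε
  have hclose : μ Bᶜ ^ p.toReal⁻¹ * ENNReal.ofReal (2 * M) < min rs rt := by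
    rw [mul_comm]
    exact (mul_le_mul_right (ENNReal.rpow_le_rpow hμB.le (by positivity)) _).trans_lt hεr
  obtain ⟨ζ, hζ, hζM, hζs, hζt⟩ := exists_measurable_eqOn_eqOn_comp (hg.iterate k) hB hdisj
    s'.measurable t'.measurable hsM htM
  have hζLp : MemLp ζ p μ := .of_bound hζ.aestronglyMeasurable M (ae_of_all _ hζM)
  have hTζ : T^[k] (hζLp.toLp ζ) =ᵐ[μ] ζ ∘ g^[k] :=
    (hT k _).trans ((hqmp.iterate k).ae_eq hζLp.coeFn_toLp)
  refine ⟨k, hk, T^[k] (hζLp.toLp ζ), mem_image_of_mem _ (hrsU ?_), hrtV ?_⟩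
  · exact (Lp.edist_le_of_eqOn hζLp.coeFn_toLp (Lp.simpleFunc.toSimpleFunc_eq_toFun s).symm
      hζM hsM hζs).trans_lt (hclose.trans_le (min_le_left _ _))
  · exact (Lp.edist_le_of_eqOn hTζ (Lp.simpleFunc.toSimpleFunc_eq_toFun t).symm
      (fun x => hζM _) htM hζt).trans_lt (hclose.trans_le (min_le_right _ _))

end

/-- Transitivity characterization for composition operators on a finite measure space
(Theorem of Bayart–Darji–Pires). -/
theorem compositionOperator_transitive_iff
    {X : Type*} [MeasurableSpace X]
    (μ : Measure X) [IsFiniteMeasure μ]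
    (g : X → X) (hg_inj : Function.Injective g) (hg_meas : Measurable g)
    (hg_bimeas : ∀ B : Set X, MeasurableSet B → MeasurableSet (g '' B))
    (hstar : CondStar μ g)
    (p : ENNReal) [Fact (1 ≤ p)] (hp' : p ≠ ⊤)
    (T : Lp ℝ p μ →L[ℝ] Lp ℝ p μ)
    (hT : ∀ φ : Lp ℝ p μ, ⇑(T φ) =ᵐ[μ] (⇑φ ∘ g)) :
    TopTransitive ⇑T ↔
      ∀ ε : ℝ, 0 < ε → ∃ k : ℕ, 1 ≤ k ∧ ∃ B : Set X,
        MeasurableSet B ∧ μ (univ \ B) < ENNReal.ofReal ε ∧ B ∩ g^[k] '' B = ∅ := by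
  have hqmp := hstar.quasiMeasurePreserving hg_meas
  have hTk := Lp.iterate_ae_eq_comp_iterate hqmp hT
  simp only [← compl_eq_univ_sdiff, ← disjoint_iff_inter_eq_empty]
  exact ⟨fun htrans ε hε => exists_disjoint_image_iterate_of_topTransitive hp' hTk htrans hε,
    topTransitive_of_exists_disjoint_image_iterate hp' ⟨hg_inj, hg_meas, hg_bimeas⟩ hqmp hTk⟩
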